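/- arXiv:2604.25246 — 4 statements merged into one kernel-verified Lean document; each statement's English description precedes it below -/
import Mathlib

section
/- Fix an integer m ≥ 1 and integers a, b with 0 ≤ a, b ≤ m−1 and a + b ≤ m−1. Then in ℚ[[x]] one has p_a(x)·p_b(x) = p_m(x)·(Σ_{u≥0} D_m(a, b; u)·x^u); equivalently, the coefficient of x^u in p_a(x)·p_b(x)·p_m(x)^{−1} equals D_m(a,b;u) for every u ≥ 0. -/
/-!
Forcing the first `a` steps up and the last `k = m - 1 - b` steps down, `D_m(a,b;u)` counts the
walks from height `a` to height `k` in the strip `[0, m - 1]` with `u` down-steps. Let `G_h` be the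
generating function of such walks starting at `h ≤ k`. Decomposing by the first step gives
`G_1 = G_0` and `G_{h+2} = G_{h+1} - x G_h`, so `G_h = p_h G_0`. Reflecting the strip, the same
holds for walks towards `m - 1 - k = b`, with generating functions `G'_h`; at the target the two
meet: `p_k G_0 = G_k = G'_b = p_b G'_0`, and `G_k = 1 + x (p_{k-1} G_0 + p_{b-1} G'_0)`. The
addition formula `p_{k+b+1} = p_k p_b - x (p_{k-1} p_b + p_k p_{b-1})` then yields
`p_m G_0 = p_b`, whence `p_a p_b = p_m G_a`.
-/

/-- The Chebyshev-type polynomial sequence: `p 0 = p 1 = 1`,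
`p (r+2) = p (r+1) - X * p r`. -/
noncomputable def chebP : ℕ → Polynomial ℚ
  | 0 => 1
  | 1 => 1
  | (r+2) => chebP (r+1) - Polynomial.X * chebP r

/-- The height of a lattice path after its first `i` steps, where the path is
encoded as `st : Fin n → Bool` (`true` = up-step `U = (1,1)`,
`false` = down-step `D = (1,-1)`), starting at `(0,0)`. -/
def heightAt {n : ℕ} (st : Fin n → Bool) (i : ℕ) : ℤ :=
  ∑ j ∈ Finset.univ.filter (fun j : Fin n => (j : ℕ) < i),
    (if st j then (1 : ℤ) else -1)

/-- `dyckCount m a b u` is the number of Dyck paths (lattice paths from `(0,0)`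
ending on the x-axis with steps `U = (1,1)`, `D = (1,-1)` that never go below
the x-axis) of height at most `m-1` and semilength `m-1-b+u` whose first `a`
steps are up-steps and whose last `m-1-b` steps are down-steps. -/
noncomputable def dyckCount (m a b u : ℕ) : ℕ :=
  Nat.card {st : Fin (2 * (m - 1 - b + u)) → Bool //
    heightAt st (2 * (m - 1 - b + u)) = 0 ∧
    (∀ i ≤ 2 * (m - 1 - b + u), 0 ≤ heightAt st i ∧ heightAt st i ≤ (m : ℤ) - 1) ∧
    (∀ j : Fin (2 * (m - 1 - b + u)), (j : ℕ) < a → st j = true) ∧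
    (∀ j : Fin (2 * (m - 1 - b + u)),
        2 * (m - 1 - b + u) - (m - 1 - b) ≤ (j : ℕ) → st j = false)}

namespace ChebyshevDyck

lemma heightAt_zero {n : ℕ} (st : Fin n → Bool) : heightAt st 0 = 0 := by
  simp [heightAt]

lemma heightAt_cons {n : ℕ} (c : Bool) (x : Fin n → Bool) (i : ℕ) :
    heightAt (Fin.cons c x : Fin (n + 1) → Bool) (i + 1) =
      (if c then 1 else -1) + heightAt x i := by
  simp only [heightAt, Finset.sum_filter, Fin.sum_univ_succ, Fin.cons_zero, Fin.cons_succ,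
    Fin.val_zero, Fin.val_succ, Nat.zero_lt_succ, if_true, Nat.add_lt_add_iff_right]

lemma forall_le_succ_left {n : ℕ} {p : ℕ → Prop} :
    (∀ i ≤ n + 1, p i) ↔ p 0 ∧ ∀ i ≤ n, p (i + 1) := by
  simpa only [Nat.lt_succ_iff] using Nat.forall_lt_succ_left (n := n + 1) (p := p)

def IsStripPath (m k h a : ℕ) {n : ℕ} (st : Fin n → Bool) : Prop :=
  (h : ℤ) + heightAt st n = 0 ∧
  (∀ i ≤ n, 0 ≤ (h : ℤ) + heightAt st i ∧ (h : ℤ) + heightAt st i ≤ (m : ℤ) - 1) ∧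
  (∀ j : Fin n, (j : ℕ) < a → st j = true) ∧
  (∀ j : Fin n, n - k ≤ (j : ℕ) → st j = false)

lemma isStripPath_cons_true_iff {m k h a n : ℕ} (x : Fin n → Bool) :
    IsStripPath m k h a (Fin.cons true x : Fin (n + 1) → Bool) ↔
      (k ≤ n ∧ h + 1 < m) ∧ IsStripPath m k (h + 1) (a - 1) x := by
  simp only [IsStripPath, forall_le_succ_left, Fin.forall_fin_succ, heightAt_cons, heightAt_zero,
    Fin.cons_zero, Fin.cons_succ, Fin.val_zero, Fin.val_succ, if_true]
  push_cast
  constructor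
  · rintro ⟨hend, ⟨-, hstrip⟩, ⟨-, hup⟩, ⟨hfirst, hdown⟩⟩
    have hkn : k ≤ n := by by_contra; simp at hfirst; omega
    have hh : h + 1 < m := by have := hstrip 0 (Nat.zero_le n); simp [heightAt_zero] at this; omega
    refine ⟨⟨hkn, hh⟩, by linarith, fun i hi => ?_, fun j hj => hup j (by omega),
      fun j hj => hdown j (by omega)⟩
    constructor <;> linarith [hstrip i hi]
  · rintro ⟨⟨hkn, hh⟩, hend, hstrip, hup, hdown⟩
    refine ⟨by linarith, ⟨by omega, fun i hi => ?_⟩,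
      ⟨fun _ => trivial, fun j hj => hup j (by omega)⟩,
      ⟨by omega, fun j hj => hdown j (by omega)⟩⟩
    constructor <;> linarith [hstrip i hi]

lemma isStripPath_cons_false_iff {m k h a n : ℕ} (hh : h < m) (x : Fin n → Bool) :
    IsStripPath m k h a (Fin.cons false x : Fin (n + 1) → Bool) ↔
      (a = 0 ∧ 1 ≤ h) ∧ IsStripPath m k (h - 1) 0 x := by
  simp only [IsStripPath, forall_le_succ_left, Fin.forall_fin_succ, heightAt_cons, heightAt_zero,
    Fin.cons_zero, Fin.cons_succ, Fin.val_zero, Fin.val_succ, Bool.false_eq_true, if_false]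
  constructor
  · rintro ⟨hend, ⟨-, hstrip⟩, ⟨hfirst, -⟩, ⟨-, hdown⟩⟩
    have ha : a = 0 := by by_contra; simp at hfirst; omega
    have h1 : 1 ≤ h := by have := hstrip 0 (Nat.zero_le n); simp [heightAt_zero] at this; omega
    refine ⟨⟨ha, h1⟩, ?_, fun i hi => ?_, fun j hj => by omega,
      fun j hj => hdown j (by omega)⟩
    · push_cast [h1]; linarith
    · push_cast [h1]; constructor <;> linarith [hstrip i hi]
  · rintro ⟨⟨rfl, h1⟩, hend, hstrip, -, hdown⟩
    push_cast [h1] at hend hstrip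
    refine ⟨by linarith, ⟨by omega, fun i hi => ?_⟩, ⟨by omega, fun j hj => by omega⟩,
      ⟨fun _ => trivial, fun j hj => hdown j (by omega)⟩⟩
    constructor <;> linarith [hstrip i hi]

lemma card_cons_split {n : ℕ} (P : (Fin (n + 1) → Bool) → Prop) :
    Nat.card {st // P st} = Nat.card {x : Fin n → Bool // P (Fin.cons false x)} +
      Nat.card {x : Fin n → Bool // P (Fin.cons true x)} := by
  let e : (Fin (n + 1) → Bool) ≃ (Fin n → Bool) ⊕ (Fin n → Bool) :=
    (Fin.consEquiv fun _ => Bool).symm.trans (Equiv.boolProdEquivSum _)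
  rw [← Nat.card_sum]
  exact Nat.card_congr <| (e.subtypeEquiv (q := fun s => P (e.symm s)) fun st => by simp).trans
    Equiv.subtypeSum

lemma card_subtype_and_left {α : Type*} (p : Prop) [Decidable p] (Q : α → Prop) :
    Nat.card {x // p ∧ Q x} = if p then Nat.card {x // Q x} else 0 := by
  split_ifs with hp <;> simp [hp]

noncomputable def pathCount (m k n h a : ℕ) : ℕ :=
  Nat.card {st : Fin n → Bool // IsStripPath m k h a st}

lemma pathCount_zero {m k h a : ℕ} (hh : h < m) :
    pathCount m k 0 h a = if h = 0 then 1 else 0 := by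
  have hiff (st : Fin 0 → Bool) : IsStripPath m k h a st ↔ h = 0 := by
    simp [IsStripPath, heightAt_zero]
    omega
  rw [pathCount, Nat.card_congr (Equiv.subtypeEquivRight hiff)]
  split_ifs with h0 <;> simp [h0]

lemma pathCount_succ {m k n h a : ℕ} (hh : h < m) :
    pathCount m k (n + 1) h a =
      (if a = 0 ∧ 1 ≤ h then pathCount m k n (h - 1) 0 else 0) +
      (if k ≤ n ∧ h + 1 < m then pathCount m k n (h + 1) (a - 1) else 0) := by
  rw [pathCount, card_cons_split,
    Nat.card_congr (Equiv.subtypeEquivRight (isStripPath_cons_false_iff hh)),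
    Nat.card_congr (Equiv.subtypeEquivRight isStripPath_cons_true_iff),
    card_subtype_and_left, card_subtype_and_left, pathCount, pathCount]

def stripWalks (m k : ℕ) : ℕ → ℕ → ℕ
  | 0, h => if h = k then 1 else 0
  | n + 1, h => (if 1 ≤ h then stripWalks m k n (h - 1) else 0) +
      (if h + 1 < m then stripWalks m k n (h + 1) else 0)

lemma pathCount_of_le_forced_suffix {m k h n : ℕ} (hn : n ≤ k) (hh : h < m) :
    pathCount m k n h 0 = if h = n then 1 else 0 := by
  induction n generalizing h with
  | zero => exact pathCount_zero hh
  | succ n ih =>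
    rw [pathCount_succ hh, if_neg (show ¬(k ≤ n ∧ h + 1 < m) by omega), add_zero]
    by_cases h1 : 1 ≤ h
    · rw [if_pos ⟨rfl, h1⟩, ih (by omega) (by omega)]
      split_ifs <;> omega
    · rw [if_neg (by omega), if_neg (by omega)]

lemma pathCount_add_eq_stripWalks {m k h n : ℕ} (hh : h < m) :
    pathCount m k (n + k) h 0 = stripWalks m k n h := by
  induction n generalizing h with
  | zero => rw [zero_add, pathCount_of_le_forced_suffix le_rfl hh, stripWalks]
  | succ n ih =>
    rw [Nat.add_right_comm, pathCount_succ hh, stripWalks]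
    congr 1
    · by_cases h1 : 1 ≤ h
      · rw [if_pos ⟨rfl, h1⟩, if_pos h1, ih (by omega)]
      · rw [if_neg (by omega), if_neg h1]
    · by_cases h1 : h + 1 < m
      · rw [if_pos ⟨by omega, h1⟩, if_pos h1, ih h1]
      · rw [if_neg (by omega), if_neg h1]

lemma pathCount_forced_prefix {m k h n : ℕ} (a : ℕ) (hha : h + a < m) (hkn : k ≤ n) :
    pathCount m k (a + n) h a = pathCount m k n (h + a) 0 := by
  induction a generalizing h with
  | zero => simp only [zero_add, add_zero]
  | succ a ih =>
    rw [Nat.add_right_comm, pathCount_succ (by omega), if_neg (by omega), zero_add,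
      if_pos ⟨by omega, by omega⟩, Nat.add_sub_cancel, ih (by omega), Nat.add_right_comm,
      add_assoc]

lemma dyckCount_eq_stripWalks {m a b : ℕ} (u : ℕ) (hm : 1 ≤ m) (hab : a + b ≤ m - 1) :
    dyckCount m a b u = stripWalks m (m - 1 - b) (m - 1 - b - a + 2 * u) a := by
  have hlen : 2 * (m - 1 - b + u) = a + ((m - 1 - b - a + 2 * u) + (m - 1 - b)) := by omega
  calc dyckCount m a b u = pathCount m (m - 1 - b) (2 * (m - 1 - b + u)) 0 a := by
        simp only [dyckCount, pathCount, IsStripPath, Nat.cast_zero, zero_add]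
    _ = stripWalks m (m - 1 - b) (m - 1 - b - a + 2 * u) a := by
        rw [hlen, pathCount_forced_prefix a (by omega) (by omega), zero_add,
          pathCount_add_eq_stripWalks (by omega)]

lemma stripWalks_eq_zero_of_lt {m k n h : ℕ} (hlt : n + h < k) : stripWalks m k n h = 0 := by
  induction n generalizing h with
  | zero => rw [stripWalks, if_neg (by omega)]
  | succ n ih => rw [stripWalks, ih (by omega), ih (by omega)]; simp

lemma stripWalks_reflect {m k n h : ℕ} (hh : h < m) (hk : k < m) :
    stripWalks m k n h = stripWalks m (m - 1 - k) n (m - 1 - h) := by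
  induction n generalizing h with
  | zero => simp only [stripWalks, show h = k ↔ m - 1 - h = m - 1 - k by omega]
  | succ n ih =>
    rw [stripWalks, stripWalks, add_comm]
    congr 1
    · by_cases hup : h + 1 < m
      · rw [if_pos hup, if_pos (by omega), ih hup, show m - 1 - (h + 1) = m - 1 - h - 1 by omega]
      · rw [if_neg hup, if_neg (by omega)]
    · by_cases hdown : 1 ≤ h
      · rw [if_pos hdown, if_pos (by omega), ih (by omega),
          show m - 1 - (h - 1) = m - 1 - h + 1 by omega]
      · rw [if_neg hdown, if_neg (by omega)]

/-- `chebQ r` is `p_{r-1}`, with `p_{-1} = 0`, so that `p_{r+1} = p_r - x p_{r-1}` holds for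
all `r`. -/
noncomputable def chebQ : ℕ → Polynomial ℚ
  | 0 => 0
  | r + 1 => chebP r

lemma chebP_succ (r : ℕ) : chebP (r + 1) = chebP r - Polynomial.X * chebQ r := by
  cases r with
  | zero => simp [chebP, chebQ]
  | succ r => rfl

lemma chebP_add_add_one (c d : ℕ) :
    chebP (c + d + 1) =
      chebP c * chebP d - Polynomial.X * (chebQ c * chebP d + chebP c * chebQ d) := by
  induction c generalizing d with
  | zero => simp [chebP, chebQ, chebP_succ]
  | succ c ih =>
    rw [show c + 1 + d + 1 = c + (d + 1) + 1 by omega, ih, chebP_succ c, chebP_succ d]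
    simp only [chebQ]
    ring

lemma chebP_coeff_zero (r : ℕ) : (chebP r).coeff 0 = 1 := by
  induction r using Nat.twoStepInduction with
  | zero | one => simp [chebP]
  | more r _ ih => simp [chebP, ih]

open PowerSeries

lemma coe_chebP_zero : (chebP 0 : ℚ⟦X⟧) = 1 := by simp [chebP]

lemma coe_chebP_one : (chebP 1 : ℚ⟦X⟧) = 1 := by simp [chebP]

lemma coe_chebP_add_two (r : ℕ) :
    (chebP (r + 2) : ℚ⟦X⟧) = (chebP (r + 1) : ℚ⟦X⟧) - X * (chebP r : ℚ⟦X⟧) := by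
  show ((chebP (r + 1) - Polynomial.X * chebP r : Polynomial ℚ) : ℚ⟦X⟧) = _
  push_cast
  rfl

lemma eq_chebP_mul_of_recurrence {f : ℕ → ℚ⟦X⟧} {k : ℕ} (h1 : 1 ≤ k → f 1 = f 0)
    (h2 : ∀ h, h + 2 ≤ k → f (h + 2) = f (h + 1) - X * f h) :
    ∀ h ≤ k, f h = (chebP h : ℚ⟦X⟧) * f 0 := by
  intro h
  induction h using Nat.twoStepInduction with
  | zero => simp [coe_chebP_zero]
  | one => intro hk; rw [coe_chebP_one, one_mul, h1 hk]
  | more h ih ih' =>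
    intro hk
    rw [h2 h hk, ih (by omega), ih' (by omega), coe_chebP_add_two]
    ring

lemma chebP_add_add_one_mul_eq {k k' : ℕ} {α β : ℚ⟦X⟧}
    (hαβ : (chebP k : ℚ⟦X⟧) * α = chebP k' * β)
    (hk : (chebP k : ℚ⟦X⟧) * α =
      1 + X * ((chebQ k : ℚ⟦X⟧) * α + (chebQ k' : ℚ⟦X⟧) * β)) :
    (chebP (k + k' + 1) : ℚ⟦X⟧) * α = chebP k' := by
  have hid := congrArg (fun p : Polynomial ℚ => (p : ℚ⟦X⟧)) (chebP_add_add_one k k')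
  push_cast at hid
  linear_combination α * hid + (chebP k' : ℚ⟦X⟧) * hk - X * (chebQ k' : ℚ⟦X⟧) * hαβ

/-- When `h ≤ k`, the exponent `u` is the number of down-steps. -/
noncomputable def walkSeries (m k h : ℕ) : ℚ⟦X⟧ :=
  mk fun u => (stripWalks m k (k - h + 2 * u) h : ℚ)

lemma walkSeries_one {m k : ℕ} (hk : 1 ≤ k) (hkm : k < m) :
    walkSeries m k 1 = walkSeries m k 0 := by
  ext u
  simp only [walkSeries, coeff_mk]
  rw [show k - 0 + 2 * u = k - 1 + 2 * u + 1 by omega, stripWalks, if_neg (by omega),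
    if_pos (by omega), zero_add]

lemma walkSeries_add_two {m k h : ℕ} (hk : h + 2 ≤ k) (hkm : k < m) :
    walkSeries m k (h + 2) = walkSeries m k (h + 1) - X * walkSeries m k h := by
  rw [eq_sub_iff_add_eq]
  ext u
  rw [map_add]
  simp only [walkSeries, coeff_mk]
  rw [show k - (h + 1) + 2 * u = k - (h + 2) + 2 * u + 1 by omega, stripWalks, if_pos (by omega),
    if_pos (by omega), Nat.add_sub_cancel, add_comm, Nat.cast_add]
  congr 1
  rcases u with _ | u
  · rw [coeff_zero_X_mul, stripWalks_eq_zero_of_lt (by omega), Nat.cast_zero]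
  · rw [coeff_succ_X_mul, coeff_mk, show k - (h + 2) + 2 * (u + 1) = k - h + 2 * u by omega]

lemma walkSeries_eq_chebP_mul {m k h : ℕ} (hh : h ≤ k) (hkm : k < m) :
    walkSeries m k h = (chebP h : ℚ⟦X⟧) * walkSeries m k 0 :=
  eq_chebP_mul_of_recurrence (fun hk => walkSeries_one hk hkm)
    (fun _ hk => walkSeries_add_two hk hkm) h hh

lemma coeff_chebQ_mul_walkSeries_zero {m k : ℕ} (hkm : k < m) (u : ℕ) :
    coeff u ((chebQ k : ℚ⟦X⟧) * walkSeries m k 0) =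
      if 1 ≤ k then (stripWalks m k (2 * u + 1) (k - 1) : ℚ) else 0 := by
  cases k with
  | zero => simp [chebQ]
  | succ j =>
    rw [chebQ, ← walkSeries_eq_chebP_mul (by omega) hkm, walkSeries, coeff_mk, if_pos (by omega),
      show j + 1 - j + 2 * u = 2 * u + 1 by omega, Nat.add_sub_cancel]

lemma walkSeries_self_reflect {m k : ℕ} (hkm : k < m) :
    walkSeries m k k = walkSeries m (m - 1 - k) (m - 1 - k) := by
  ext u
  simp only [walkSeries, coeff_mk, Nat.sub_self, stripWalks_reflect hkm hkm]

lemma walkSeries_self {m k : ℕ} (hkm : k < m) :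
    walkSeries m k k = 1 + X * ((chebQ k : ℚ⟦X⟧) * walkSeries m k 0 +
      (chebQ (m - 1 - k) : ℚ⟦X⟧) * walkSeries m (m - 1 - k) 0) := by
  ext u
  rcases u with _ | u
  · simp [walkSeries, stripWalks]
  · rw [map_add, coeff_succ_X_mul, map_add, coeff_chebQ_mul_walkSeries_zero hkm,
      coeff_chebQ_mul_walkSeries_zero (by omega), walkSeries, coeff_mk, coeff_one,
      if_neg (by omega), zero_add, Nat.sub_self, zero_add,
      show 2 * (u + 1) = 2 * u + 1 + 1 by ring, stripWalks, Nat.cast_add]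
    congr 1
    · split_ifs <;> simp
    · by_cases hup : k + 1 < m
      · rw [if_pos hup, if_pos (by omega), stripWalks_reflect hup hkm,
          show m - 1 - (k + 1) = m - 1 - k - 1 by omega]
      · rw [if_neg hup, if_neg (by omega), Nat.cast_zero]

lemma chebP_mul_walkSeries_zero {m k : ℕ} (hkm : k < m) :
    (chebP m : ℚ⟦X⟧) * walkSeries m k 0 = chebP (m - 1 - k) := by
  have hk := walkSeries_eq_chebP_mul le_rfl hkm
  have hk' := walkSeries_eq_chebP_mul (le_refl (m - 1 - k)) (by omega : m - 1 - k < m)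
  have := chebP_add_add_one_mul_eq (k := k) (k' := m - 1 - k)
    (by rw [← hk, ← hk', walkSeries_self_reflect hkm]) (by rw [← hk, walkSeries_self hkm])
  rwa [show k + (m - 1 - k) + 1 = m by omega] at this

end ChebyshevDyck

open ChebyshevDyck PowerSeries

theorem statement5_general (m a b : ℕ) (hm : 1 ≤ m)
    (hab : a + b ≤ m - 1) :
    ((chebP a : PowerSeries ℚ) * (chebP b : PowerSeries ℚ)
        = (chebP m : PowerSeries ℚ) *
            PowerSeries.mk (fun u => (dyckCount m a b u : ℚ))) ∧
    (∀ u : ℕ,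
      PowerSeries.coeff (R := ℚ) u
        ((chebP a : PowerSeries ℚ) * (chebP b : PowerSeries ℚ) *
          ((chebP m : PowerSeries ℚ))⁻¹)
      = (dyckCount m a b u : ℚ)) := by
  have hkm : m - 1 - b < m := by omega
  have hdyck : mk (fun u => (dyckCount m a b u : ℚ)) = walkSeries m (m - 1 - b) a := by
    ext u
    rw [coeff_mk, dyckCount_eq_stripWalks u hm hab, walkSeries, coeff_mk]
  have hprod :
      (chebP a : ℚ⟦X⟧) * chebP b = chebP m * mk fun u => (dyckCount m a b u : ℚ) := by
    rw [hdyck, walkSeries_eq_chebP_mul (by omega) hkm, mul_left_comm,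
      chebP_mul_walkSeries_zero hkm, show m - 1 - (m - 1 - b) = b by omega]
  have hunit : constantCoeff (chebP m : ℚ⟦X⟧) ≠ 0 := by
    simp [Polynomial.constantCoeff_coe, chebP_coeff_zero]
  refine ⟨hprod, fun u => ?_⟩
  rw [← PowerSeries.eq_mul_inv_iff_mul_eq hunit |>.mpr (by rw [hprod, mul_comm]), coeff_mk]

/-- fix `m ≥ 1` and `a, b` with `0 ≤ a, b ≤ m-1`, `a + b ≤ m-1`.
Then in `ℚ[[x]]` one has `p_a·p_b = p_m·(Σ_u D_m(a,b;u)·x^u)`; equivalently,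
the coefficient of `x^u` in `p_a·p_b·p_m^{-1}` equals `D_m(a,b;u)` for all `u`. -/
theorem statement5 (m a b : ℕ) (hm : 1 ≤ m) (ha : a ≤ m - 1) (hb : b ≤ m - 1)
    (hab : a + b ≤ m - 1) :
    ((chebP a : PowerSeries ℚ) * (chebP b : PowerSeries ℚ)
        = (chebP m : PowerSeries ℚ) *
            PowerSeries.mk (fun u => (dyckCount m a b u : ℚ))) ∧
    (∀ u : ℕ,
      PowerSeries.coeff (R := ℚ) u
        ((chebP a : PowerSeries ℚ) * (chebP b : PowerSeries ℚ) *
          ((chebP m : PowerSeries ℚ))⁻¹)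
      = (dyckCount m a b u : ℚ)) :=
  statement5_general m a b hm hab
end

section
/- Fix integers m ≥ 1, q ≥ 0, ρ with 0 ≤ ρ < m, and N ≥ 0. Then the coefficient of x^N in the power series p_{m−ρ−1}(x)·p_m(x)^{−(q+1)} ∈ ℚ[[x]] equals the number of (q+1)-tuples (P_0, P_1, …, P_q) of Dyck paths for which there exist nonnegative integers u_0, u_1, …, u_q with u_0+u_1+⋯+u_q = N, P_0 is counted by D_m(0, m−ρ−1; u_0) (a Dyck path of height at most m−1 and semilength ρ+u_0 whose last ρ steps are down-steps), and for 1 ≤ ν ≤ q, P_ν is counted by D_m(0, 0; u_ν) (a Dyck path of height at most m−1 and semilength m−1+u_ν whose last m−1 steps are down-steps). -/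
/-!
Deleting its final run of down-steps turns a path counted by `D_m(0, b; u)` into a walk of
length `c + 2u` from height `0` to height `c = m - 1 - b` that stays in `[0, m - 1]`, and back.
Let `G_i` be the generating function of such confined walks ending at height `i`, with `x`
marking half of the excess length. Splitting off the last step gives `G_0 = 1 + x G_1`,
`G_{i+1} = G_i + x G_{i+2}` and `G_m = 0`; read downwards from the top these are the recurrence
of `p_r`, so `G_{m-1-r} = p_r G_{m-1}`, and one step further `p_m G_{m-1} = 1`. Hence
`p_b p_m^{-(q+1)} = G_{m-1-b} G_{m-1}^q`, whose coefficients are given by the Cauchy product.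
-/

open PowerSeries

lemma Nat.card_subtype_fin_succ {n : ℕ} {α : Type*} [Fintype α] (P : (Fin (n + 1) → α) → Prop) :
    Nat.card {f // P f} = ∑ a : α, Nat.card {w : Fin n → α // P (Fin.snoc w a)} := by
  calc Nat.card {f // P f}
      = Nat.card {c : α × (Fin n → α) // P (Fin.snoc c.2 c.1)} :=
        Nat.card_congr ((Fin.snocEquiv fun _ => α).subtypeEquiv fun _ => Iff.rfl).symm
    _ = Nat.card (Σ a : α, {w : Fin n → α // P (Fin.snoc w a)}) :=
        Nat.card_congr (Equiv.subtypeProdEquivSigmaSubtype fun a w => P (Fin.snoc w a))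
    _ = _ := Nat.card_sigma

lemma PowerSeries.coeff_prod_eq_sum_antidiagonalTuple {R : Type*} [CommSemiring R] {k : ℕ}
    (f : Fin k → R⟦X⟧) (N : ℕ) :
    coeff N (∏ i, f i) = ∑ u ∈ Finset.Nat.antidiagonalTuple k N, ∏ i, coeff (u i) (f i) := by
  rw [coeff_prod, Finset.finsuppAntidiag, Finset.sum_map,
    ← Finset.piAntidiag_univ_fin_eq_antidiagonalTuple, ← Finset.sum_attach (Finset.piAntidiag _ _)]
  rfl

section Walks

variable {n : ℕ}

lemma heightAt_eq_sum_fin (st : Fin n → Bool) {i : ℕ} (hi : i ≤ n) :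
    heightAt st i = ∑ j : Fin i, if st (Fin.castLE hi j) then 1 else -1 := by
  have hfilter : Finset.univ.filter (fun j : Fin n => (j : ℕ) < i)
      = Finset.univ.map (Fin.castLEEmb hi) := by
    ext j
    simp only [Finset.mem_filter, Finset.mem_univ, true_and, Finset.mem_map, Fin.castLEEmb_apply]
    exact ⟨fun h => ⟨⟨j, h⟩, rfl⟩, fun ⟨k, hk⟩ => hk ▸ k.isLt⟩
  rw [heightAt, hfilter, Finset.sum_map]
  rfl

lemma heightAt_le_self (st : Fin n → Bool) {i : ℕ} (hi : i ≤ n) : heightAt st i ≤ i := by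
  rw [heightAt_eq_sum_fin st hi]
  calc (∑ j : Fin i, if st (Fin.castLE hi j) then (1 : ℤ) else -1) ≤ ∑ _j : Fin i, 1 :=
        Finset.sum_le_sum fun _ _ => by split <;> norm_num
    _ = i := by simp

lemma heightAt_snoc_of_le (w : Fin n → Bool) (b : Bool) {i : ℕ} (hi : i ≤ n) :
    heightAt (Fin.snoc w b : Fin (n + 1) → Bool) i = heightAt w i := by
  rw [heightAt_eq_sum_fin _ (hi.trans n.le_succ), heightAt_eq_sum_fin w hi]
  congr! 2 with j
  rw [show (Fin.castLE _ j : Fin (n + 1)) = (Fin.castLE hi j).castSucc from rfl, Fin.snoc_castSucc]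

lemma heightAt_snoc_succ (w : Fin n → Bool) (b : Bool) :
    heightAt (Fin.snoc w b : Fin (n + 1) → Bool) (n + 1) = heightAt w n + if b then 1 else -1 := by
  simp [heightAt_eq_sum_fin _ le_rfl, Fin.sum_univ_castSucc]

variable (m : ℕ)

def IsBoundedWalk (st : Fin n → Bool) (j : ℤ) : Prop :=
  heightAt st n = j ∧ ∀ k ≤ n, 0 ≤ heightAt st k ∧ heightAt st k ≤ (m : ℤ) - 1

noncomputable def walkCount (n : ℕ) (j : ℤ) : ℕ :=
  Nat.card {st : Fin n → Bool // IsBoundedWalk m st j}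

lemma isBoundedWalk_snoc (w : Fin n → Bool) (b : Bool) (j : ℤ) :
    IsBoundedWalk m (Fin.snoc w b : Fin (n + 1) → Bool) j ↔
      IsBoundedWalk m w (j - if b then 1 else -1) ∧ 0 ≤ j ∧ j ≤ (m : ℤ) - 1 := by
  simp only [IsBoundedWalk, heightAt_snoc_succ, eq_sub_iff_add_eq]
  constructor
  · rintro ⟨hend, hbound⟩
    refine ⟨⟨hend, fun k hk => ?_⟩, ?_⟩
    · simpa only [heightAt_snoc_of_le w b hk] using hbound k (hk.trans n.le_succ)
    · rw [← hend, ← heightAt_snoc_succ]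
      exact hbound (n + 1) le_rfl
  · rintro ⟨⟨hend, hbound⟩, hj⟩
    refine ⟨hend, fun k hk => ?_⟩
    rcases Nat.lt_or_ge k (n + 1) with hk' | hk'
    · rw [heightAt_snoc_of_le w b (Nat.lt_succ_iff.mp hk')]
      exact hbound k (Nat.lt_succ_iff.mp hk')
    · rw [le_antisymm hk hk', heightAt_snoc_succ, hend]
      exact hj

lemma walkCount_eq_zero {j : ℤ} (h : j < 0 ∨ (m : ℤ) - 1 < j ∨ (n : ℤ) < j) :
    walkCount m n j = 0 := by
  refine Nat.card_eq_zero.2 (Or.inl ⟨fun ⟨st, hend, hbound⟩ => ?_⟩)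
  have := hbound n le_rfl
  have := heightAt_le_self st (le_refl n)
  omega

lemma walkCount_zero_zero (hm : 1 ≤ m) : walkCount m 0 0 = 1 := by
  have hwalk (st : Fin 0 → Bool) : IsBoundedWalk m st 0 := by
    refine ⟨rfl, fun k hk => ?_⟩
    rw [Nat.le_zero.mp hk]
    exact ⟨le_rfl, by simp only [heightAt, Finset.univ_eq_empty, Finset.filter_empty,
      Finset.sum_empty]; omega⟩
  rw [walkCount, Nat.card_congr (Equiv.subtypeUnivEquiv hwalk), Nat.card_unique]

lemma walkCount_succ {j : ℤ} (hj₀ : 0 ≤ j) (hj₁ : j ≤ (m : ℤ) - 1) :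
    walkCount m (n + 1) j = walkCount m n (j - 1) + walkCount m n (j + 1) := by
  simp only [walkCount, Nat.card_subtype_fin_succ, isBoundedWalk_snoc, Fintype.sum_bool,
    if_true, Bool.false_eq_true, if_false, sub_neg_eq_add, hj₀, hj₁, and_true]

lemma card_isBoundedWalk_tail_down (L : ℕ) : ∀ (c : ℕ) (e : ℤ), 0 ≤ e → e + c ≤ (m : ℤ) - 1 →
    Nat.card {st : Fin (L + c) → Bool //
      IsBoundedWalk m st e ∧ ∀ j : Fin (L + c), L ≤ j → st j = false} = walkCount m L (e + c)
  | 0, e, _, _ => by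
    simp only [Nat.cast_zero, add_zero, walkCount]
    refine Nat.card_congr (Equiv.subtypeEquivRight fun st => and_iff_left_iff_imp.2 ?_)
    exact fun _ j hj => absurd j.isLt (not_lt.2 hj)
  | c + 1, e, he₀, he₁ => by
    have hlast : Nat.card {w : Fin (L + c) → Bool // IsBoundedWalk m (Fin.snoc w true) e ∧
        ∀ j : Fin (L + c + 1), L ≤ j → (Fin.snoc w true : Fin (L + c + 1) → Bool) j = false} = 0 :=
      Nat.card_eq_zero.2 (Or.inl ⟨fun ⟨w, _, htail⟩ => by
        simpa using htail (Fin.last _) (by simp)⟩)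
    rw [← Nat.add_assoc, Nat.card_subtype_fin_succ, Fintype.sum_bool, hlast, zero_add]
    simp only [isBoundedWalk_snoc, Fin.forall_fin_succ', Fin.snoc_castSucc, Fin.snoc_last,
      Bool.false_eq_true, if_false, sub_neg_eq_add]
    have he : e ≤ (m : ℤ) - 1 := by omega
    rw [show e + ((c + 1 : ℕ) : ℤ) = e + 1 + c by push_cast; ring,
      ← card_isBoundedWalk_tail_down L c (e + 1) (by omega) (by omega)]
    exact Nat.card_congr (Equiv.subtypeEquivRight fun w => by
      simp only [he₀, he, and_true, Fin.val_castSucc, imp_true_iff])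

lemma dyckCount_zero_eq_walkCount (hm : 1 ≤ m) (b u : ℕ) :
    dyckCount m 0 b u = walkCount m (m - 1 - b + 2 * u) (m - 1 - b : ℕ) := by
  rw [dyckCount, show 2 * (m - 1 - b + u) = m - 1 - b + 2 * u + (m - 1 - b) by omega,
    Nat.add_sub_cancel, ← zero_add ((m - 1 - b : ℕ) : ℤ),
    ← card_isBoundedWalk_tail_down m _ _ 0 le_rfl (by omega)]
  exact Nat.card_congr (Equiv.subtypeEquivRight fun st => by
    simp only [IsBoundedWalk, Nat.not_lt_zero, false_imp_iff, implies_true, true_and, and_assoc])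

end Walks

section WalkSeries

variable (m : ℕ)

noncomputable def walkSeries (i : ℕ) : ℚ⟦X⟧ :=
  mk fun u => (walkCount m (i + 2 * u) i : ℚ)

@[simp]
lemma coeff_walkSeries (i u : ℕ) : coeff u (walkSeries m i) = walkCount m (i + 2 * u) i :=
  coeff_mk _ _

lemma walkSeries_eq_zero_of_le {i : ℕ} (h : m ≤ i) : walkSeries m i = 0 := by
  ext u
  rw [coeff_walkSeries, walkCount_eq_zero m (Or.inr (Or.inl (by omega))), Nat.cast_zero, map_zero]

lemma walkSeries_zero (hm : 1 ≤ m) : walkSeries m 0 = 1 + X * walkSeries m 1 := by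
  ext (_ | u)
  · simp [walkCount_zero_zero m hm]
  · rw [coeff_walkSeries, map_add, coeff_succ_X_mul, coeff_walkSeries, coeff_one,
      if_neg u.succ_ne_zero, zero_add, show 2 * (u + 1) = 1 + 2 * u + 1 by ring, Nat.cast_zero,
      walkCount_succ m le_rfl (by omega), walkCount_eq_zero m (Or.inl (by norm_num))]
    simp

lemma walkSeries_succ {i : ℕ} (hi : i + 2 ≤ m) :
    walkSeries m (i + 1) = walkSeries m i + X * walkSeries m (i + 2) := by
  ext u
  rw [map_add, coeff_walkSeries, coeff_walkSeries, show i + 1 + 2 * u = i + 2 * u + 1 by ring,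
    walkCount_succ m (by positivity) (by omega), show ((i + 1 : ℕ) : ℤ) - 1 = i by push_cast; ring,
    show ((i + 1 : ℕ) : ℤ) + 1 = ((i + 2 : ℕ) : ℤ) by push_cast; ring, Nat.cast_add]
  rcases u with _ | u
  · rw [coeff_zero_X_mul, walkCount_eq_zero m (j := ((i + 2 : ℕ) : ℤ)) (Or.inr (Or.inr (by omega))),
      Nat.cast_zero]
  · rw [coeff_succ_X_mul, coeff_walkSeries, show i + 2 * (u + 1) = i + 2 + 2 * u by ring]

lemma walkSeries_eq_chebP_mul : ∀ r i : ℕ, i + r + 1 = m →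
    walkSeries m i = chebP r * walkSeries m (m - 1)
  | 0, i, h => by rw [chebP, Polynomial.coe_one, one_mul, show i = m - 1 by omega]
  | 1, i, h => by
    have hsucc := walkSeries_succ m (i := i) (by omega)
    rw [walkSeries_eq_zero_of_le m (show m ≤ i + 2 by omega), mul_zero, add_zero] at hsucc
    rw [chebP, Polynomial.coe_one, one_mul, ← hsucc, show i + 1 = m - 1 by omega]
  | r + 2, i, h => by
    rw [eq_sub_of_add_eq (walkSeries_succ m (i := i) (by omega)).symm,
      walkSeries_eq_chebP_mul (r + 1) (i + 1) (by omega),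
      walkSeries_eq_chebP_mul r (i + 2) (by omega), chebP]
    push_cast
    ring

lemma chebP_mul_walkSeries (hm : 1 ≤ m) : (chebP m : ℚ⟦X⟧) * walkSeries m (m - 1) = 1 := by
  obtain ⟨k, rfl⟩ : ∃ k, m = k + 1 := ⟨m - 1, by omega⟩
  rcases k with _ | k
  · simpa [chebP, walkSeries_eq_zero_of_le] using walkSeries_zero 1 le_rfl
  · rw [chebP, Polynomial.coe_sub, Polynomial.coe_mul, Polynomial.coe_X, sub_mul, mul_assoc,
      ← walkSeries_eq_chebP_mul _ (k + 1) 0 (by omega), ← walkSeries_eq_chebP_mul _ k 1 (by omega),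
      walkSeries_zero _ hm]
    ring

end WalkSeries

theorem statement6_general (m q ρ N : ℕ) (hm : 1 ≤ m) :
    PowerSeries.coeff N
      ((chebP (m - ρ - 1) : PowerSeries ℚ) *
        ((chebP m : PowerSeries ℚ))⁻¹ ^ (q + 1))
    = ∑ u ∈ Finset.Nat.antidiagonalTuple (q + 1) N,
        (dyckCount m 0 (m - ρ - 1) (u 0) : ℚ) *
          ∏ ν : Fin q, (dyckCount m 0 0 (u ν.succ) : ℚ) := by
  have hunit := chebP_mul_walkSeries m hm
  have hinv : (chebP m : ℚ⟦X⟧)⁻¹ = walkSeries m (m - 1) := by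
    have hconst : constantCoeff (chebP m : ℚ⟦X⟧) * constantCoeff (walkSeries m (m - 1)) = 1 := by
      rw [← map_mul, hunit, map_one]
    exact (inv_eq_iff_mul_eq_one (left_ne_zero_of_mul_eq_one hconst)).2 (by rw [mul_comm, hunit])
  have hfirst : (chebP (m - ρ - 1) : ℚ⟦X⟧) * walkSeries m (m - 1)
      = walkSeries m (m - 1 - (m - ρ - 1)) :=
    (walkSeries_eq_chebP_mul m _ _ (by omega)).symm
  rw [hinv, pow_succ', ← mul_assoc, hfirst, ← Fin.prod_const, ← Fin.prod_cons,
    coeff_prod_eq_sum_antidiagonalTuple]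
  refine Finset.sum_congr rfl fun u _ => ?_
  simp only [Fin.prod_univ_succ, Fin.cons_zero, Fin.cons_succ, coeff_walkSeries,
    dyckCount_zero_eq_walkCount m hm, Nat.sub_zero]

/-- fix `m ≥ 1`, `q ≥ 0`, `0 ≤ ρ < m`, and `N ≥ 0`.  The
coefficient of `x^N` in `p_{m-ρ-1}(x)·p_m(x)^{-(q+1)} ∈ ℚ[[x]]` equals the
number of `(q+1)`-tuples `(P₀,…,P_q)` of Dyck paths such that for some
`u₀+⋯+u_q = N`, `P₀` is counted by `D_m(0, m-ρ-1; u₀)` and each `P_ν`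
(`1 ≤ ν ≤ q`) is counted by `D_m(0,0; u_ν)`; that is, it equals
`Σ_{u₀+⋯+u_q = N} D_m(0,m-ρ-1;u₀)·∏_{ν=1}^q D_m(0,0;u_ν)`. -/
theorem statement6 (m q ρ N : ℕ) (hm : 1 ≤ m) (hρ : ρ < m) :
    PowerSeries.coeff N
      ((chebP (m - ρ - 1) : PowerSeries ℚ) *
        ((chebP m : PowerSeries ℚ))⁻¹ ^ (q + 1))
    = ∑ u ∈ Finset.Nat.antidiagonalTuple (q + 1) N,
        (dyckCount m 0 (m - ρ - 1) (u 0) : ℚ) *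
          ∏ ν : Fin q, (dyckCount m 0 0 (u ν.succ) : ℚ) :=
  statement6_general m q ρ N hm
end

section
/- Let m ≥ 1 and let a, b be integers with 0 ≤ a ≤ b ≤ m−1. Then the (a,b) entry of the adjugate matrix of K_m(s) = I − s·A_m over ℚ[s] equals s^{b−a}·p_a(s²)·p_{m−1−b}(s²); equivalently, p_m(s²)·(K_m(s)^{−1})_{a,b} = s^{b−a}·p_a(s²)·p_{m−1−b}(s²) as an identity of rational functions in s. -/
/-- The adjacency matrix of the path graph on `m` vertices `0,…,m-1`
(entries in `ℚ[s]`): `(A_m)_{i,j} = 1` if `|i - j| = 1` and `0` otherwise. -/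
noncomputable def pathAdj (m : ℕ) : Matrix (Fin m) (Fin m) (Polynomial ℚ) :=
  fun i j => if (i : ℕ) + 1 = (j : ℕ) ∨ (j : ℕ) + 1 = (i : ℕ) then 1 else 0

/-- `K_m(s) = I - s·A_m` over `ℚ[s]`, taking `s` to be the variable `X`. -/
noncomputable def pathK (m : ℕ) : Matrix (Fin m) (Fin m) (Polynomial ℚ) :=
  1 - (Polynomial.X : Polynomial ℚ) • pathAdj m

open Polynomial

noncomputable def chebPSq (n : ℤ) : ℚ[X] :=
  if n < 0 then 0 else (chebP n.toNat).comp (X ^ 2)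

lemma chebPSq_natCast (n : ℕ) : chebPSq n = (chebP n).comp (X ^ 2) := by
  simp [chebPSq]

lemma chebPSq_neg_one : chebPSq (-1) = 0 := by
  simp [chebPSq]

lemma chebPSq_succ {r : ℤ} (hr : 0 ≤ r) :
    chebPSq (r + 1) = chebPSq r - X ^ 2 * chebPSq (r - 1) := by
  lift r to ℕ using hr
  rcases r with _ | n
  · simp [chebPSq, chebP]
  · rw [show ((n + 1 : ℕ) : ℤ) + 1 = (n + 2 : ℕ) by push_cast; ring,
      show ((n + 1 : ℕ) : ℤ) - 1 = n by push_cast; ring]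
    simp only [chebPSq_natCast, chebP, sub_comp, mul_comp, X_comp]

lemma chebPSq_add {a b : ℤ} (ha : 0 ≤ a) (hb : 0 ≤ b) :
    chebPSq a * chebPSq (b + 1) - X ^ 2 * chebPSq (a - 1) * chebPSq b = chebPSq (a + b + 1) := by
  lift a to ℕ using ha
  induction a generalizing b with
  | zero => simp [chebPSq, chebP]
  | succ a ih =>
    push_cast
    have h := ih (b := b + 1) (by omega)
    rw [show (a : ℤ) + (b + 1) + 1 = a + 1 + b + 1 by ring] at h
    rw [← h, chebPSq_succ (Nat.cast_nonneg a), chebPSq_succ (r := b + 1) (by omega),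
      add_sub_cancel_right, add_sub_cancel_right]
    ring

lemma chebPSq_natCast_ne_zero (n : ℕ) : chebPSq n ≠ 0 := by
  have eval_zero : ∀ r, (chebP r).eval 0 = 1 := by
    intro r
    induction r using Nat.twoStepInduction with
    | zero | one => simp [chebP]
    | more r _ ih => simp [chebP, ih]
  intro h
  simpa [chebPSq_natCast, eval_comp, eval_zero] using congrArg (eval 0) h

noncomputable def pathGreen (m : ℕ) (i j : ℤ) : ℚ[X] :=
  X ^ (i - j).natAbs * chebPSq (min i j) * chebPSq (m - 1 - max i j)

lemma pathGreen_neg_one_left (m : ℕ) {j : ℤ} (hj : 0 ≤ j) : pathGreen m (-1) j = 0 := by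
  rw [pathGreen, min_eq_left (by omega), chebPSq_neg_one, mul_zero, zero_mul]

lemma pathGreen_length_left (m : ℕ) {j : ℤ} (hj : j ≤ m) : pathGreen m m j = 0 := by
  rw [pathGreen, max_eq_left hj, show (m : ℤ) - 1 - m = -1 by ring, chebPSq_neg_one, mul_zero]

lemma pathGreen_sub_X_mul_neighbors {m : ℕ} {i j : ℤ} (hi₀ : 0 ≤ i) (hi : i < m) :
    pathGreen m i j - X * (pathGreen m (i + 1) j + pathGreen m (i - 1) j) =
      if i = j then chebPSq m else 0 := by
  simp only [pathGreen]
  rcases lt_trichotomy i j with hlt | rfl | hgt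
  · rw [if_neg hlt.ne, min_eq_left hlt.le, min_eq_left (by omega), min_eq_left (by omega),
      max_eq_right hlt.le, max_eq_right (by omega), max_eq_right (by omega),
      show (i - j).natAbs = (i + 1 - j).natAbs + 1 by omega,
      show (i - 1 - j).natAbs = (i + 1 - j).natAbs + 2 by omega, chebPSq_succ hi₀]
    ring
  · rw [if_pos rfl, min_self, max_self, min_eq_right (by omega), min_eq_left (by omega),
      max_eq_left (by omega), max_eq_right (by omega), sub_self, Int.natAbs_zero,
      show (i + 1 - i).natAbs = 1 by omega, show (i - 1 - i).natAbs = 1 by omega]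
    have hr₀ : 0 ≤ (m : ℤ) - 1 - i := by omega
    have h := chebPSq_add hi₀ hr₀
    have hr := chebPSq_succ hr₀
    rw [show i + (m - 1 - i) + 1 = m by ring] at h
    rw [show (m : ℤ) - 1 - i - 1 = m - 1 - (i + 1) by ring] at hr
    linear_combination h - chebPSq i * hr
  · rw [if_neg hgt.ne', min_eq_right hgt.le, min_eq_right (by omega), min_eq_right (by omega),
      max_eq_left hgt.le, max_eq_left (by omega), max_eq_left (by omega),
      show (i + 1 - j).natAbs = (i - 1 - j).natAbs + 2 by omega,
      show (i - j).natAbs = (i - 1 - j).natAbs + 1 by omega,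
      show (m : ℤ) - 1 - (i - 1) = m - 1 - i + 1 by ring,
      chebPSq_succ (show 0 ≤ (m : ℤ) - 1 - i by omega)]
    ring_nf

lemma Fin.sum_ite_cast_eq {M : Type*} [AddCommMonoid M] {m : ℕ} (f : ℤ → M) {t : ℤ}
    (ht : (0 ≤ t ∧ t < m) ∨ f t = 0) :
    ∑ k : Fin m, (if (k : ℤ) = t then f k else 0) = f t := by
  by_cases hrange : 0 ≤ t ∧ t < m
  · rw [Fintype.sum_eq_single ⟨t.toNat, by omega⟩ fun k hk => if_neg ?_]
    · simp [Int.toNat_of_nonneg hrange.1]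
    · intro hkt
      exact hk (Fin.ext (by simp only; omega))
  · rw [Fintype.sum_eq_zero _ fun k => if_neg (by omega)]
    exact (ht.resolve_left hrange).symm

lemma sum_pathAdj_mul {m : ℕ} (f : ℤ → ℚ[X]) (hlo : f (-1) = 0) (hhi : f m = 0) (i : Fin m) :
    ∑ k, pathAdj m i k * f k = f (i + 1) + f (i - 1) := by
  have hterm : ∀ k : Fin m, pathAdj m i k * f k =
      (if (k : ℤ) = i + 1 then f k else 0) + (if (k : ℤ) = i - 1 then f k else 0) := by
    intro k
    simp only [pathAdj]
    split_ifs <;> first | omega | simp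
  rw [Fintype.sum_congr _ _ hterm, Finset.sum_add_distrib, Fin.sum_ite_cast_eq, Fin.sum_ite_cast_eq]
  · by_cases hi : (i : ℤ) = 0
    · exact .inr (by rw [hi, zero_sub, hlo])
    · exact .inl (by omega)
  · by_cases hi : (i : ℤ) + 1 = m
    · exact .inr (by rw [hi, hhi])
    · exact .inl (by omega)

lemma pathK_mul_pathGreen (m : ℕ) :
    pathK m * Matrix.of (fun i j : Fin m => pathGreen m i j) = chebPSq m • 1 := by
  refine Matrix.ext fun i j => ?_
  rw [pathK, Matrix.sub_mul, Matrix.smul_mul, one_mul, Matrix.sub_apply, Matrix.smul_apply,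
    Matrix.mul_apply, Matrix.smul_apply, Matrix.one_apply]
  simp only [Matrix.of_apply, smul_eq_mul]
  rw [sum_pathAdj_mul (pathGreen m · j) (pathGreen_neg_one_left m (Int.natCast_nonneg _))
      (pathGreen_length_left m (by omega)),
    pathGreen_sub_X_mul_neighbors (Int.natCast_nonneg _) (by omega)]
  simp [Fin.ext_iff]

lemma Matrix.smul_adjugate_of_mul_eq_smul_one {n R : Type*} [Fintype n] [DecidableEq n]
    [CommRing R] {A B : Matrix n n R} {c : R} (h : A * B = c • 1) :
    c • A.adjugate = A.det • B := by
  calc c • A.adjugate = A.adjugate * (A * B) := by rw [h, Matrix.mul_smul, mul_one]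
    _ = A.det • B := by rw [← mul_assoc, Matrix.adjugate_mul, Matrix.smul_mul, one_mul]

lemma pathK_submatrix_succ (m : ℕ) : (pathK (m + 1)).submatrix Fin.succ Fin.succ = pathK m := by
  ext i j : 1
  simp [pathK, pathAdj, Matrix.one_apply]

lemma det_pathK (m : ℕ) : (pathK m).det = chebPSq m := by
  induction m with
  | zero => simp [chebPSq, chebP]
  | succ m ih =>
    have h := congrFun₂ (Matrix.smul_adjugate_of_mul_eq_smul_one (pathK_mul_pathGreen (m + 1))) 0 0
    rw [Matrix.smul_apply, Matrix.smul_apply, Matrix.adjugate_fin_succ_eq_det_submatrix,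
      Fin.succAbove_zero, pathK_submatrix_succ, ih, Matrix.of_apply] at h
    have hG : pathGreen (m + 1) ((0 : Fin (m + 1)) : ℕ) ((0 : Fin (m + 1)) : ℕ) = chebPSq m := by
      simp [pathGreen, chebPSq, chebP]
    rw [hG, smul_eq_mul, smul_eq_mul, Fin.val_zero, pow_zero, one_mul] at h
    exact (mul_right_cancel₀ (chebPSq_natCast_ne_zero m) h).symm

lemma adjugate_pathK_apply (m : ℕ) (i j : Fin m) :
    (pathK m).adjugate i j = pathGreen m i j := by
  have h := Matrix.smul_adjugate_of_mul_eq_smul_one (pathK_mul_pathGreen m)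
  rw [det_pathK] at h
  exact congrFun₂ (smul_right_injective _ (chebPSq_natCast_ne_zero m) h) i j

theorem statement12_general (m : ℕ) (a b : Fin m) (hab : (a : ℕ) ≤ (b : ℕ)) :
    (pathK m).adjugate a b
      = Polynomial.X ^ ((b : ℕ) - (a : ℕ)) *
          (chebP (a : ℕ)).comp (Polynomial.X ^ 2) *
          (chebP (m - 1 - (b : ℕ))).comp (Polynomial.X ^ 2) := by
  rw [adjugate_pathK_apply, pathGreen, min_eq_left (by omega), max_eq_right (by omega),
    show ((a : ℤ) - b).natAbs = b - a by omega, chebPSq_natCast,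
    show (m : ℤ) - 1 - b = (m - 1 - b : ℕ) by omega, chebPSq_natCast]

/-- let `m ≥ 1` and `0 ≤ a ≤ b ≤ m-1`.  Then the `(a,b)` entry
of the adjugate matrix of `K_m(s) = I - s·A_m` over `ℚ[s]` equals
`s^{b-a}·p_a(s²)·p_{m-1-b}(s²)` (equivalently,
`p_m(s²)·(K_m(s)⁻¹)_{a,b} = s^{b-a}·p_a(s²)·p_{m-1-b}(s²)`). -/
theorem statement12 (m : ℕ) (hm : 1 ≤ m) (a b : Fin m) (hab : (a : ℕ) ≤ (b : ℕ)) :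
    (pathK m).adjugate a b
      = Polynomial.X ^ ((b : ℕ) - (a : ℕ)) *
          (chebP (a : ℕ)).comp (Polynomial.X ^ 2) *
          (chebP (m - 1 - (b : ℕ))).comp (Polynomial.X ^ 2) :=
  statement12_general m a b hab
end

section
/- Fix an integer m ≥ 1 and integers a, b with 0 ≤ a, b ≤ m−1 and a + b ≤ m−1, and let u ≥ 0. Then the number of strip walks of height m−1 from a to m−1−b of length m−1−a−b+2u equals D_m(a,b;u); that is, w_{m−1−a−b+2u}^{(m)}(a, m−1−b) = D_m(a,b;u). -/
/-- `stripWalkCount m L a b` is the number of strip walks of height `m-1` from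
`a` to `b` of length `L`: sequences `(h₀,…,h_L)` of integers with `h₀ = a`,
`h_L = b`, `h_{i+1} - h_i ∈ {±1}`, and `0 ≤ h_i ≤ m-1` for all `i`.
Heights in `{0,…,m-1}` are encoded as elements of `Fin m`. -/
noncomputable def stripWalkCount (m L a b : ℕ) : ℕ :=
  Nat.card {h : Fin (L + 1) → Fin m //
    (h 0 : ℕ) = a ∧ (h (Fin.last L) : ℕ) = b ∧
    ∀ i : Fin L, ((h i.succ : ℤ) = (h i.castSucc : ℤ) + 1 ∨
                  (h i.succ : ℤ) = (h i.castSucc : ℤ) - 1)}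

lemma heightAt_zero {n : ℕ} (st : Fin n → Bool) : heightAt st 0 = 0 := by
  unfold heightAt; simp

lemma heightAt_succ {n : ℕ} (st : Fin n → Bool) {i : ℕ} (hi : i < n) :
    heightAt st (i + 1) = heightAt st i + (if st ⟨i, hi⟩ then (1:ℤ) else -1) := by
  unfold heightAt
  have hins : Finset.univ.filter (fun j : Fin n => (j : ℕ) < i + 1)
      = insert ⟨i, hi⟩ (Finset.univ.filter (fun j : Fin n => (j : ℕ) < i)) := by
    ext j
    simp [Fin.ext_iff]
    omega
  rw [hins, Finset.sum_insert (by simp)]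
  ring

lemma heightAt_up {n : ℕ} (st : Fin n → Bool) {p c : ℕ} (hpc : p + c ≤ n)
    (htrue : ∀ j : Fin n, p ≤ (j:ℕ) → (j:ℕ) < p + c → st j = true) :
    ∀ t ≤ c, heightAt st (p + t) = heightAt st p + t := by
  intro t ht
  induction t with
  | zero => simp
  | succ t ih =>
    have h1 : p + t < n := by omega
    have h2 : st ⟨p + t, h1⟩ = true :=
      htrue ⟨p + t, h1⟩ (by show p ≤ p + t; omega) (by show p + t < p + c; omega)
    rw [show p + (t+1) = (p+t) + 1 by ring, heightAt_succ st h1, ih (by omega), h2]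
    simp only [if_true, ite_true, if_false, ite_false, Bool.false_eq_true]
    push_cast; ring

lemma heightAt_down {n : ℕ} (st : Fin n → Bool) {p c : ℕ} (hpc : p + c ≤ n)
    (hfalse : ∀ j : Fin n, p ≤ (j:ℕ) → (j:ℕ) < p + c → st j = false) :
    ∀ t ≤ c, heightAt st (p + t) = heightAt st p - t := by
  intro t ht
  induction t with
  | zero => simp
  | succ t ih =>
    have h1 : p + t < n := by omega
    have h2 : st ⟨p + t, h1⟩ = false :=
      hfalse ⟨p + t, h1⟩ (by show p ≤ p + t; omega) (by show p + t < p + c; omega)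
    rw [show p + (t+1) = (p+t) + 1 by ring, heightAt_succ st h1, ih (by omega), h2]
    simp only [if_true, ite_true, if_false, ite_false, Bool.false_eq_true]
    push_cast; ring

def stepOf (m L a : ℕ) (h : Fin (L + 1) → Fin m) (j : ℕ) : Bool :=
  if _hja : j < a then true
  else if hj : j < a + L then
    decide ((h ⟨j - a, by omega⟩ : ℕ) < (h ⟨j - a + 1, by omega⟩ : ℕ))
  else false

lemma stepOf_lt {m L a : ℕ} (h : Fin (L + 1) → Fin m) {j : ℕ} (hj : j < a) :
    stepOf m L a h j = true := by
  unfold stepOf; rw [dif_pos hj]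

lemma stepOf_ge {m L a : ℕ} (h : Fin (L + 1) → Fin m) {j : ℕ} (hj : a + L ≤ j) :
    stepOf m L a h j = false := by
  unfold stepOf; rw [dif_neg (by omega), dif_neg (by omega)]

lemma stepOf_mid {m L a : ℕ} (h : Fin (L + 1) → Fin m) {k : ℕ} (hk : k < L) :
    stepOf m L a h (a + k) = decide ((h ⟨k, by omega⟩ : ℕ) < (h ⟨k + 1, by omega⟩ : ℕ)) := by
  unfold stepOf
  rw [dif_neg (by omega), dif_pos (by omega)]
  simp only [Nat.add_sub_cancel_left]

lemma heightAt_mid {m L a n : ℕ} (h : Fin (L + 1) → Fin m) (hn : a + L ≤ n)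
    (h0 : (h 0 : ℕ) = a)
    (hstep : ∀ i : Fin L, ((h i.succ : ℤ) = (h i.castSucc : ℤ) + 1 ∨
                  (h i.succ : ℤ) = (h i.castSucc : ℤ) - 1)) :
    ∀ k, (hk : k ≤ L) → heightAt (fun j : Fin n => stepOf m L a h (j : ℕ)) (a + k)
      = ((h ⟨k, by omega⟩ : ℕ) : ℤ) := by
  have hbase : heightAt (fun j : Fin n => stepOf m L a h (j : ℕ)) a = a := by
    have := heightAt_up (fun j : Fin n => stepOf m L a h (j : ℕ)) (p := 0) (c := a)
      (by omega) (fun j _ h2 => stepOf_lt h (by omega)) a le_rfl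
    simpa [heightAt_zero] using this
  intro k
  induction k with
  | zero =>
    intro _
    rw [Nat.add_zero, hbase]
    have : h ⟨0, by omega⟩ = h 0 := rfl
    rw [this, h0]
  | succ k ih =>
    intro hk1
    have hkL : k < L := by omega
    have hin : a + k < n := by omega
    rw [show a + (k + 1) = (a + k) + 1 by ring, heightAt_succ _ hin, ih (by omega)]
    simp only [Fin.val_mk]
    rw [stepOf_mid h hkL]
    have ecan : ∀ (pf : k < L + 1), h ⟨k, pf⟩ = h (⟨k, hkL⟩ : Fin L).castSucc := fun _ => rfl
    have ecan1 : ∀ (pf : k + 1 < L + 1), h ⟨k + 1, pf⟩ = h (⟨k, hkL⟩ : Fin L).succ := fun _ => rfl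
    simp only [ecan, ecan1]
    rcases hstep ⟨k, hkL⟩ with hc | hc
    · have hlt : (h (⟨k, hkL⟩ : Fin L).castSucc : ℕ) < (h (⟨k, hkL⟩ : Fin L).succ : ℕ) := by
        omega
      simp [hlt] at hc ⊢
      omega
    · have hlt : ¬ ((h (⟨k, hkL⟩ : Fin L).castSucc : ℕ) < (h (⟨k, hkL⟩ : Fin L).succ : ℕ)) := by
        omega
      simp [hlt] at hc ⊢
      omega

lemma forward' (m a b L N : ℕ) (hm : 1 ≤ m) (ha : a ≤ m - 1)
    (hNL : N = a + L + (m - 1 - b))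
    (h : Fin (L + 1) → Fin m)
    (h0 : (h 0 : ℕ) = a)
    (hl : (h (Fin.last L) : ℕ) = m - 1 - b)
    (hs : ∀ i : Fin L,
        ((h i.succ : ℤ) = (h i.castSucc : ℤ) + 1 ∨
         (h i.succ : ℤ) = (h i.castSucc : ℤ) - 1)) :
    heightAt (fun j : Fin N => stepOf m L a h (j : ℕ)) N = 0 ∧
    (∀ i ≤ N,
        0 ≤ heightAt (fun j : Fin N => stepOf m L a h (j : ℕ)) i ∧
        heightAt (fun j : Fin N => stepOf m L a h (j : ℕ)) i ≤ (m : ℤ) - 1) ∧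
    (∀ j : Fin N, (j : ℕ) < a → stepOf m L a h (j : ℕ) = true) ∧
    (∀ j : Fin N, N - (m - 1 - b) ≤ (j : ℕ) → stepOf m L a h (j : ℕ) = false) := by
  have hhead : ∀ i ≤ a, heightAt (fun j : Fin N => stepOf m L a h (j : ℕ)) i = i := by
    intro i hi
    have := heightAt_up (fun j : Fin N => stepOf m L a h (j : ℕ)) (p := 0) (c := a) (by omega)
      (fun j _ h2 => stepOf_lt h (by omega)) i hi
    simpa [heightAt_zero] using this
  have hmid : ∀ k, (hk : k ≤ L) → heightAt (fun j : Fin N => stepOf m L a h (j : ℕ)) (a + k)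
      = ((h ⟨k, by omega⟩ : ℕ) : ℤ) :=
    heightAt_mid h (by omega) h0 hs
  have hAL : heightAt (fun j : Fin N => stepOf m L a h (j : ℕ)) (a + L)
      = ((m - 1 - b : ℕ) : ℤ) := by
    have e := hmid L le_rfl
    have hcanon : ∀ (pf : L < L + 1), h ⟨L, pf⟩ = h (Fin.last L) := fun _ => rfl
    rw [hcanon] at e
    rw [e]
    exact_mod_cast congrArg (Nat.cast (R := ℤ)) hl
  have htail : ∀ t ≤ m - 1 - b, heightAt (fun j : Fin N => stepOf m L a h (j : ℕ)) (a + L + t)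
      = heightAt (fun j : Fin N => stepOf m L a h (j : ℕ)) (a + L) - t :=
    heightAt_down (fun j : Fin N => stepOf m L a h (j : ℕ)) (p := a + L) (c := m - 1 - b)
      (by omega) (fun j h1 h2 => stepOf_ge h (by omega))
  refine ⟨?_, ?_, ?_, ?_⟩
  · have e := htail (m - 1 - b) le_rfl
    rw [hAL] at e
    rw [show a + L + (m - 1 - b) = N from hNL.symm] at e
    rw [e]
    ring
  · intro i hi
    by_cases h1 : i ≤ a
    · have := hhead i h1
      constructor <;> omega
    · by_cases h2 : i ≤ a + L
      · obtain ⟨v, hvm, hvi⟩ : ∃ v : ℕ, v < m ∧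
            heightAt (fun j : Fin N => stepOf m L a h (j : ℕ)) i = (v : ℤ) := by
          refine ⟨(h ⟨i - a, by omega⟩ : ℕ), Fin.is_lt _, ?_⟩
          have e := hmid (i - a) (by omega)
          rw [show a + (i - a) = i by omega] at e
          exact e
        constructor <;> omega
      · have e := htail (i - (a + L)) (by omega)
        rw [show a + L + (i - (a + L)) = i by omega, hAL] at e
        constructor <;> omega
  · intro j hj
    exact stepOf_lt h hj
  · intro j hj
    exact stepOf_ge h (by omega)

/-- fix `m ≥ 1` and `a, b` with `0 ≤ a, b ≤ m-1`, `a + b ≤ m-1`,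
and let `u ≥ 0`.  Then the number of strip walks of height `m-1` from `a` to
`m-1-b` of length `m-1-a-b+2u` equals `D_m(a,b;u)`. -/
theorem statement16 (m a b u : ℕ) (hm : 1 ≤ m) (ha : a ≤ m - 1) (hb : b ≤ m - 1)
    (hab : a + b ≤ m - 1) :
    stripWalkCount m (m - 1 - a - b + 2 * u) a (m - 1 - b) = dyckCount m a b u := by
  rw [stripWalkCount, dyckCount]
  exact Nat.card_eq_of_bijective
    (fun w => ⟨fun j : Fin (2 * (m - 1 - b + u)) =>
        stepOf m (m - 1 - a - b + 2 * u) a w.1 (j : ℕ),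
      forward' m a b (m - 1 - a - b + 2 * u) (2 * (m - 1 - b + u)) hm ha (by omega)
        w.1 w.2.1 w.2.2.1 w.2.2.2⟩)
    (by
      constructor
      · -- injective
        intro w1 w2 hw
        have heq : (fun j : Fin (2 * (m - 1 - b + u)) =>
              stepOf m (m - 1 - a - b + 2 * u) a w1.1 (j : ℕ))
            = (fun j : Fin (2 * (m - 1 - b + u)) =>
              stepOf m (m - 1 - a - b + 2 * u) a w2.1 (j : ℕ)) :=
          congrArg Subtype.val hw
        apply Subtype.ext
        funext k
        have hkL : (k : ℕ) ≤ m - 1 - a - b + 2 * u := Nat.lt_succ_iff.mp k.isLt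
        have e1 := heightAt_mid (n := 2 * (m - 1 - b + u)) w1.1 (by omega) w1.2.1 w1.2.2.2
          (k : ℕ) hkL
        have e2 := heightAt_mid (n := 2 * (m - 1 - b + u)) w2.1 (by omega) w2.2.1 w2.2.2.2
          (k : ℕ) hkL
        rw [heq] at e1
        have ck1 : ∀ (pf : (k : ℕ) < m - 1 - a - b + 2 * u + 1),
            (⟨(k : ℕ), pf⟩ : Fin (m - 1 - a - b + 2 * u + 1)) = k := fun _ => rfl
        rw [ck1] at e1 e2
        apply Fin.ext
        omega
      · -- surjective
        rintro ⟨st, c1, c2, c3, c4⟩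
        have hbound : ∀ k : Fin (m - 1 - a - b + 2 * u + 1),
            (heightAt st (a + (k : ℕ))).toNat < m := by
          intro k
          have hk := Nat.lt_succ_iff.mp k.isLt
          have := c2 (a + (k : ℕ)) (by omega)
          omega
        set hf : Fin (m - 1 - a - b + 2 * u + 1) → Fin m :=
          fun k => ⟨(heightAt st (a + (k : ℕ))).toNat, hbound k⟩ with hfdef
        have hfval : ∀ k : Fin (m - 1 - a - b + 2 * u + 1),
            ((hf k : Fin m) : ℤ) = heightAt st (a + (k : ℕ)) := by
          intro k
          have hk := Nat.lt_succ_iff.mp k.isLt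
          have := c2 (a + (k : ℕ)) (by omega)
          simp only [hfdef, Fin.val_mk]
          exact Int.toNat_of_nonneg this.1
        clear_value hf
        clear hfdef hbound
        have hup : ∀ i ≤ a, heightAt st i = (i : ℤ) := by
          intro i hi
          have := heightAt_up st (p := 0) (c := a) (by omega)
            (fun j _ h2 => c3 j (by omega)) i hi
          simpa [heightAt_zero] using this
        have hdown := heightAt_down st (p := a + (m - 1 - a - b + 2 * u)) (c := m - 1 - b)
          (by omega) (fun j h1 h2 => c4 j (by omega))
        have hend : heightAt st (a + (m - 1 - a - b + 2 * u)) = ((m - 1 - b : ℕ) : ℤ) := by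
          have e := hdown (m - 1 - b) le_rfl
          rw [show a + (m - 1 - a - b + 2 * u) + (m - 1 - b) = 2 * (m - 1 - b + u) by omega,
            c1] at e
          omega
        have hp1 : (hf 0 : ℕ) = a := by
          have e := hfval 0
          simp only [Fin.val_zero, Nat.add_zero] at e
          rw [hup a le_rfl] at e
          exact_mod_cast e
        have hp2 : (hf (Fin.last (m - 1 - a - b + 2 * u)) : ℕ) = m - 1 - b := by
          have e := hfval (Fin.last (m - 1 - a - b + 2 * u))
          simp only [Fin.val_last] at e
          rw [hend] at e
          exact_mod_cast e
        have hp3 : ∀ i : Fin (m - 1 - a - b + 2 * u),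
            ((hf i.succ : ℤ) = (hf i.castSucc : ℤ) + 1 ∨
             (hf i.succ : ℤ) = (hf i.castSucc : ℤ) - 1) := by
          intro i
          have hlt : a + (i : ℕ) < 2 * (m - 1 - b + u) := by
            have := i.isLt; omega
          have hsucc := heightAt_succ st hlt
          have e1 := hfval i.succ
          have e2 := hfval i.castSucc
          simp only [Fin.val_succ, Fin.coe_castSucc] at e1 e2
          rw [show a + ((i : ℕ) + 1) = (a + (i : ℕ)) + 1 from rfl] at e1
          cases hstv : st ⟨a + (i : ℕ), hlt⟩ with
          | true =>
            rw [hstv] at hsucc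
            simp at hsucc
            left; omega
          | false =>
            rw [hstv] at hsucc
            simp at hsucc
            right; omega
        refine ⟨⟨hf, hp1, hp2, hp3⟩, ?_⟩
        apply Subtype.ext
        show (fun j : Fin (2 * (m - 1 - b + u)) =>
            stepOf m (m - 1 - a - b + 2 * u) a hf (j : ℕ)) = st
        funext j
        by_cases hj1 : (j : ℕ) < a
        · show stepOf m (m - 1 - a - b + 2 * u) a hf (j : ℕ) = st j
          rw [stepOf_lt hf hj1, c3 j hj1]
        · by_cases hj2 : (j : ℕ) < a + (m - 1 - a - b + 2 * u)
          · show stepOf m (m - 1 - a - b + 2 * u) a hf (j : ℕ) = st j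
            have hk : (j : ℕ) - a < m - 1 - a - b + 2 * u := by omega
            have e := stepOf_mid (a := a) hf (k := (j : ℕ) - a) hk
            rw [show a + ((j : ℕ) - a) = (j : ℕ) by omega] at e
            have hpA : (j : ℕ) - a < m - 1 - a - b + 2 * u + 1 := by omega
            have hpB : (j : ℕ) - a + 1 < m - 1 - a - b + 2 * u + 1 := by omega
            have e' : stepOf m (m - 1 - a - b + 2 * u) a hf (j : ℕ)
                = decide ((hf ⟨(j : ℕ) - a, hpA⟩ : ℕ) < (hf ⟨(j : ℕ) - a + 1, hpB⟩ : ℕ)) := e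
            rw [e']
            have f1 := hfval ⟨(j : ℕ) - a, hpA⟩
            have f2 := hfval ⟨(j : ℕ) - a + 1, hpB⟩
            simp only [Fin.val_mk] at f1 f2
            rw [show a + ((j : ℕ) - a) = (j : ℕ) by omega] at f1
            rw [show a + ((j : ℕ) - a + 1) = (j : ℕ) + 1 by omega] at f2
            have hlt : (j : ℕ) < 2 * (m - 1 - b + u) := j.isLt
            have hsucc := heightAt_succ st hlt
            have hje : (⟨(j : ℕ), hlt⟩ : Fin (2 * (m - 1 - b + u))) = j := rfl
            rw [hje] at hsucc
            have hnn := c2 (j : ℕ) (by omega)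
            cases hstv : st j with
            | true =>
              rw [hstv] at hsucc
              simp at hsucc
              simp only [decide_eq_true_eq]
              omega
            | false =>
              rw [hstv] at hsucc
              simp at hsucc
              simp only [decide_eq_false_iff_not]
              omega
          · show stepOf m (m - 1 - a - b + 2 * u) a hf (j : ℕ) = st j
            rw [stepOf_ge hf (by omega), c4 j (by omega)])
end
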